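/- For every n ≥ 0 and every j,k ∈ {0,…,n}, the sum over compositions l_1+⋯+l_{j+1} = n with l_1,…,l_j ∈ ℕ_{≥1} and l_{j+1} ∈ ℕ_{≥0} of the coefficient of t^k in (t^{(l_1)}/l_1!)⋯(t^{(l_j)}/l_j!) · [(t+1)(t+3)⋯(t+2l_{j+1}−1)/(2^{l_{j+1}} l_{j+1}!)] equals (2^j j!)/(2^n n!) · B(n,k) · S_B(k,j), where B and S_B are the B-analogues of the Stirling numbers of the first and second kind. -/

import Mathlib

/-- The Stirling numbers of the second kind. -/
def stirling2 : ℕ → ℕ → ℕ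
  | 0, 0 => 1
  | 0, _ + 1 => 0
  | _ + 1, 0 => 0
  | n + 1, k + 1 => (k + 1) * stirling2 n (k + 1) + stirling2 n k

/-- The `B`-analogues of the Stirling numbers of the first kind, defined via the recursion
corresponding to `(t+1)(t+3)⋯(t+2n-1) = ∑ₖ B(n,k) tᵏ`. -/
def stirlingB1 : ℕ → ℕ → ℕ
  | 0, 0 => 1
  | 0, _ + 1 => 0
  | n + 1, 0 => (2 * n + 1) * stirlingB1 n 0
  | n + 1, k + 1 => (2 * n + 1) * stirlingB1 n (k + 1) + stirlingB1 n k

/-- The `B`-analogue of the Stirling numbers of the second kind: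
`S_B(k,j) = Σ_{m=j}^{k} 2^{m−j} binom(k,m) S(m,j)`. -/
def stirlingB2 (n k : ℕ) : ℕ :=
  ∑ m ∈ Finset.Icc k n, 2 ^ (m - k) * n.choose m * stirling2 m k

/-!
With `F = ∑ₗ t^{(l)}/l! xˡ = (1 - x)^{-t}` and `H = (1 - x)^{-(t+1)/2}`, the sum is the
coefficient of `xⁿ` in `(F - 1)ʲ H`. Its binomial transform in `j` is
`[xⁿ] Fˢ H = [xⁿ] (1 - x)^{-((2s+1)t+1)/2} = ∏_{m<n} ((2s+1)t + 2m + 1) / (2ⁿ n!)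
  = ∑ₖ B(n,k) (2s+1)ᵏ tᵏ / (2ⁿ n!)`,
and expanding `(2s+1)ᵏ` binomially and `sᵐ` in falling factorials gives
`(2s+1)ᵏ = ∑ⱼ binom(s,j) 2ʲ j! S_B(k,j)`, so the right-hand side has the same transform.
Binomial inversion concludes.
-/

open Finset

theorem stirling2_eq_stirlingSecond : stirling2 = Nat.stirlingSecond := by
  ext m j
  induction m generalizing j with
  | zero => cases j <;> rfl
  | succ m ih => cases j <;> simp [stirling2, Nat.stirlingSecond, ih]

theorem Nat.pow_eq_sum_stirlingSecond_mul_descFactorial (x m : ℕ) :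
    x ^ m = ∑ j ∈ range (x + 1), m.stirlingSecond j * x.descFactorial j := by
  induction m with
  | zero => simp [sum_range_succ' _ x]
  | succ m ih =>
    have hmul : ∀ j ∈ range (x + 1),
        x * x.descFactorial j = x.descFactorial (j + 1) + j * x.descFactorial j := by
      intro j hj
      rw [Nat.descFactorial_succ, ← add_mul,
        Nat.sub_add_cancel (Nat.lt_succ_iff.mp (mem_range.mp hj))]
    have htop : ∑ j ∈ range (x + 1), m.stirlingSecond j * x.descFactorial (j + 1) =
        ∑ j ∈ range x, m.stirlingSecond j * x.descFactorial (j + 1) := by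
      rw [sum_range_succ, Nat.descFactorial_of_lt x.lt_succ_self, mul_zero, add_zero]
    have hbot : ∑ j ∈ range (x + 1), m.stirlingSecond j * (j * x.descFactorial j) =
        ∑ j ∈ range x, m.stirlingSecond (j + 1) * ((j + 1) * x.descFactorial (j + 1)) := by
      rw [sum_range_succ', zero_mul, mul_zero, add_zero]
    calc x ^ (m + 1) = ∑ j ∈ range (x + 1), m.stirlingSecond j * (x * x.descFactorial j) := by
          rw [pow_succ, mul_comm, ih, mul_sum]; exact sum_congr rfl fun j _ => mul_left_comm _ _ _
      _ = ∑ j ∈ range x, ((j + 1) * m.stirlingSecond (j + 1) + m.stirlingSecond j) *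
            x.descFactorial (j + 1) := by
          rw [sum_congr rfl fun j hj => by rw [hmul j hj, mul_add], sum_add_distrib, htop, hbot,
            ← sum_add_distrib]
          exact sum_congr rfl fun j _ => by ring
      _ = ∑ j ∈ range (x + 1), (m + 1).stirlingSecond j * x.descFactorial j := by
          rw [sum_range_succ' _ x]; simp [Nat.stirlingSecond_succ_succ]

theorem stirlingB2_eq_sum_range (k j : ℕ) :
    stirlingB2 k j = ∑ m ∈ range (k + 1), 2 ^ (m - j) * k.choose m * m.stirlingSecond j := by
  rw [stirlingB2, stirling2_eq_stirlingSecond]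
  refine sum_subset (fun m hm => by simp only [mem_Icc, mem_range] at hm ⊢; omega) fun m _ hm => ?_
  simp only [mem_Icc, not_and_or, not_le] at hm
  rcases hm with hm | hm
  · rw [Nat.stirlingSecond_eq_zero_of_lt hm, mul_zero]
  · rw [Nat.choose_eq_zero_of_lt hm, mul_zero, zero_mul]

theorem two_mul_add_one_pow_eq_sum_stirlingB2 (s k : ℕ) :
    (2 * s + 1) ^ k = ∑ j ∈ range (s + 1), 2 ^ j * s.descFactorial j * stirlingB2 k j := by
  have hpow : ∀ m j, 2 ^ j * (2 ^ (m - j) * m.stirlingSecond j) = 2 ^ m * m.stirlingSecond j := by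
    intro m j
    rcases le_or_gt j m with h | h
    · rw [← mul_assoc, pow_mul_pow_sub 2 h]
    · rw [Nat.stirlingSecond_eq_zero_of_lt h, mul_zero, mul_zero, mul_zero]
  calc (2 * s + 1) ^ k
      = ∑ m ∈ range (k + 1), k.choose m * 2 ^ m * s ^ m := by
        rw [add_pow]; exact sum_congr rfl fun m _ => by rw [one_pow, Nat.cast_id]; ring
    _ = ∑ m ∈ range (k + 1), ∑ j ∈ range (s + 1),
          k.choose m * (2 ^ m * m.stirlingSecond j) * s.descFactorial j := by
        refine sum_congr rfl fun m _ => ?_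
        rw [Nat.pow_eq_sum_stirlingSecond_mul_descFactorial s m, mul_sum]
        exact sum_congr rfl fun j _ => by ring
    _ = ∑ j ∈ range (s + 1), 2 ^ j * s.descFactorial j * stirlingB2 k j := by
        rw [sum_comm]
        refine sum_congr rfl fun j _ => ?_
        rw [stirlingB2_eq_sum_range, mul_sum]
        refine sum_congr rfl fun m _ => ?_
        rw [← hpow]; ring

theorem stirlingB1_eq_zero_of_lt : ∀ {n k : ℕ}, n < k → stirlingB1 n k = 0
  | 0, _ + 1, _ => rfl
  | n + 1, k + 1, h => by
      rw [stirlingB1, stirlingB1_eq_zero_of_lt (by omega), stirlingB1_eq_zero_of_lt (by omega),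
        mul_zero]

theorem prod_range_add_odd_eq_sum_stirlingB1 {R : Type*} [CommSemiring R] (a : R) (n : ℕ) :
    ∏ m ∈ range n, (a + (2 * m + 1 : ℕ)) = ∑ k ∈ range (n + 1), (stirlingB1 n k : R) * a ^ k := by
  induction n with
  | zero => simp [stirlingB1]
  | succ n ih =>
    have hlow := sum_range_succ' (fun k => (stirlingB1 n k : R) * a ^ k) (n + 1)
    rw [sum_range_succ, stirlingB1_eq_zero_of_lt n.lt_succ_self, Nat.cast_zero, zero_mul,
      add_zero, pow_zero, mul_one] at hlow
    have hshift : (∑ k ∈ range (n + 1), (stirlingB1 n k : R) * a ^ k) * a =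
        ∑ k ∈ range (n + 1), (stirlingB1 n k : R) * a ^ (k + 1) := by
      simp only [sum_mul, mul_assoc, pow_succ]
    rw [prod_range_succ, ih, sum_range_succ' _ (n + 1)]
    simp only [stirlingB1, Nat.cast_add, Nat.cast_mul, add_mul, sum_add_distrib, mul_assoc,
      ← mul_sum]
    rw [mul_add, hshift, hlow]
    ring

theorem eq_of_forall_sum_range_choose_smul_eq {M : Type*} [AddCancelCommMonoid M] {u v : ℕ → M}
    (h : ∀ s, ∑ j ∈ range (s + 1), s.choose j • u j = ∑ j ∈ range (s + 1), s.choose j • v j) :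
    u = v := by
  funext s
  induction s using Nat.strong_induction_on with
  | _ s ih =>
    have hs := h s
    rw [sum_range_succ, sum_range_succ, Nat.choose_self, one_smul, one_smul,
      sum_congr rfl fun j hj => by rw [ih j (mem_range.mp hj)]] at hs
    exact add_left_cancel hs

theorem ascPochhammer_eval_eq_prod_range {R : Type*} [CommSemiring R] (n : ℕ) (r : R) :
    (ascPochhammer R n).eval r = ∏ m ∈ range n, (r + m) := by
  induction n with
  | zero => simp
  | succ n ih => simp [ascPochhammer_succ_right, ih, prod_range_succ]

namespace Ring

variable {A : Type*} [CommRing A] [BinomialRing A] [Algebra ℚ A]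

theorem multichoose_eq_smul_prod_range (a : A) (n : ℕ) :
    multichoose a n = (n.factorial : ℚ)⁻¹ • ∏ m ∈ range n, (a + m) := by
  rw [← ascPochhammer_eval_eq_prod_range, ← Polynomial.ascPochhammer_smeval_eq_eval,
    ← factorial_nsmul_multichoose_eq_ascPochhammer, ← Nat.cast_smul_eq_nsmul ℚ,
    inv_smul_smul₀ (by positivity)]

theorem multichoose_half_add_one (a : A) (n : ℕ) :
    multichoose ((2 : ℚ)⁻¹ • (a + 1)) n =
      ((2 ^ n * n.factorial : ℕ) : ℚ)⁻¹ • ∏ m ∈ range n, (a + (2 * m + 1 : ℕ)) := by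
  have hodd (m : ℕ) : (2 : ℚ)⁻¹ • (a + 1) + m = (2 : ℚ)⁻¹ • (a + (2 * m + 1 : ℕ)) := by
    rw [show ((2 * m + 1 : ℕ) : A) = (2 : ℚ) • (m : A) + 1 by
      push_cast; rw [ofNat_smul_eq_nsmul, two_nsmul, two_mul]]
    module
  rw [multichoose_eq_smul_prod_range, prod_congr rfl fun m _ => hodd m, ← smul_prod, card_range,
    smul_smul, Nat.cast_mul, Nat.cast_pow, mul_inv, inv_pow, Nat.cast_ofNat, mul_comm]

end Ring

namespace PowerSeries

variable {R : Type*}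

theorem coeff_prod_fin [CommSemiring R] {k : ℕ} (f : Fin k → R⟦X⟧) (n : ℕ) :
    coeff n (∏ i, f i) = ∑ l ∈ Finset.Nat.antidiagonalTuple k n, ∏ i, coeff (l i) (f i) := by
  classical
  rw [coeff_prod]
  exact sum_equiv Finsupp.equivFunOnFinite (by simp [Finset.Nat.mem_antidiagonalTuple]) (by simp)

theorem coeff_sub_one_pow_mul_eq_sum_compositions [CommRing R] {f : R⟦X⟧}
    (hf : constantCoeff f = 1) (h : R⟦X⟧) (n j : ℕ) :
    coeff n ((f - 1) ^ j * h) =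
      ∑ l ∈ (Finset.Nat.antidiagonalTuple (j + 1) n).filter
          (fun l => ∀ i : Fin (j + 1), (i : ℕ) < j → 0 < l i),
        ∏ i : Fin (j + 1), if (i : ℕ) < j then coeff (l i) f else coeff (l i) h := by
  have hprod : (f - 1) ^ j * h = ∏ i : Fin (j + 1), if (i : ℕ) < j then f - 1 else h := by
    simp [Fin.prod_univ_castSucc]
  rw [hprod, coeff_prod_fin,
    ← sum_filter_of_ne (p := fun l : Fin (j + 1) → ℕ => ∀ i : Fin (j + 1), (i : ℕ) < j → 0 < l i)]
  · refine sum_congr rfl fun l hl => prod_congr rfl fun i _ => ?_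
    split_ifs with hi
    · rw [map_sub, coeff_one, if_neg ((mem_filter.mp hl).2 i hi).ne', sub_zero]
    · rfl
  · intro l _ hne i hi
    refine Nat.pos_of_ne_zero fun hl0 => hne (prod_eq_zero (mem_univ i) ?_)
    rw [if_pos hi, hl0, coeff_zero_eq_constantCoeff_apply, map_sub, hf, map_one, sub_self]

section Binomial

variable [CommRing R] [BinomialRing R]

/-- The power series `(1 - X)⁻ʳ`. -/
noncomputable def multichooseSeries (r : R) : R⟦X⟧ := mk fun n => Ring.multichoose r n

@[simp]
theorem coeff_multichooseSeries (r : R) (n : ℕ) :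
    coeff n (multichooseSeries r) = Ring.multichoose r n :=
  coeff_mk _ _

theorem multichooseSeries_eq_rescale_binomialSeries (r : R) :
    multichooseSeries r = rescale (-1) (binomialSeries R (-r)) := by
  ext n
  rw [coeff_multichooseSeries, coeff_rescale, binomialSeries_coeff, Ring.choose_neg',
    smul_eq_mul, mul_one, Units.smul_def, zsmul_eq_mul, Int.cast_negOnePow_natCast, ← mul_assoc,
    ← mul_pow, neg_one_mul, neg_neg, one_pow, one_mul]

@[simp]
theorem multichooseSeries_zero : multichooseSeries (0 : R) = 1 := by
  rw [multichooseSeries_eq_rescale_binomialSeries, neg_zero, binomialSeries_zero, map_one]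

theorem multichooseSeries_add (r s : R) :
    multichooseSeries (r + s) = multichooseSeries r * multichooseSeries s := by
  simp only [multichooseSeries_eq_rescale_binomialSeries, neg_add, binomialSeries_add, map_mul]

theorem multichooseSeries_nsmul (r : R) (s : ℕ) :
    multichooseSeries (s • r) = multichooseSeries r ^ s := by
  induction s with
  | zero => rw [zero_smul, multichooseSeries_zero, pow_zero]
  | succ s ih => rw [succ_nsmul, multichooseSeries_add, ih, pow_succ]

end Binomial

end PowerSeries

open Polynomial
open PowerSeries (multichooseSeries coeff_multichooseSeries multichooseSeries_add
  multichooseSeries_nsmul)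

theorem multichoose_X (l : ℕ) :
    Ring.multichoose (X : ℚ[X]) l =
      C ((l.factorial : ℚ)⁻¹) * ∏ m ∈ range l, (X + (m : ℚ[X])) := by
  rw [Ring.multichoose_eq_smul_prod_range, smul_eq_C_mul]

theorem multichoose_half_X_add_one (l : ℕ) :
    Ring.multichoose ((2 : ℚ)⁻¹ • (X + 1) : ℚ[X]) l =
      C (((2 ^ l * l.factorial : ℕ) : ℚ)⁻¹) * ∏ m ∈ range l, (X + ((2 * m + 1 : ℕ) : ℚ[X])) := by
  rw [Ring.multichoose_half_add_one, smul_eq_C_mul]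

theorem coeff_coeff_multichooseSeries_X_pow_mul (n s k : ℕ) :
    (PowerSeries.coeff n
        (multichooseSeries (X : ℚ[X]) ^ s * multichooseSeries ((2 : ℚ)⁻¹ • (X + 1)))).coeff k =
      ((2 ^ n * n.factorial : ℕ) : ℚ)⁻¹ * stirlingB1 n k * (2 * s + 1) ^ k := by
  have hsum : multichooseSeries (X : ℚ[X]) ^ s * multichooseSeries ((2 : ℚ)⁻¹ • (X + 1)) =
      multichooseSeries ((2 : ℚ)⁻¹ • ((2 * s + 1 : ℚ) • X + 1)) := by
    rw [← multichooseSeries_nsmul, ← multichooseSeries_add]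
    congr 1
    module
  rw [hsum, coeff_multichooseSeries, Ring.multichoose_half_add_one,
    prod_range_add_odd_eq_sum_stirlingB1, coeff_smul, finsetSum_coeff]
  simp only [_root_.smul_pow, Algebra.mul_smul_comm, coeff_smul, coeff_natCast_mul, coeff_X_pow,
    mul_ite, mul_one, mul_zero, smul_eq_mul, sum_ite_eq, mem_range, Order.lt_add_one_iff]
  split_ifs with hkn
  · ring
  · simp [stirlingB1_eq_zero_of_lt (not_le.mp hkn)]

theorem sum_range_choose_smul_stirlingB1_mul_stirlingB2 (n k s : ℕ) :
    ∑ j ∈ range (s + 1), s.choose j • (((2 ^ j * j.factorial : ℕ) : ℚ) /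
        ((2 ^ n * n.factorial : ℕ) : ℚ) * (stirlingB1 n k : ℚ) * (stirlingB2 k j : ℚ)) =
      ((2 ^ n * n.factorial : ℕ) : ℚ)⁻¹ * stirlingB1 n k * (2 * s + 1) ^ k := by
  have hpow := congrArg (Nat.cast : ℕ → ℚ) (two_mul_add_one_pow_eq_sum_stirlingB2 s k)
  push_cast at hpow
  rw [hpow, mul_sum]
  refine sum_congr rfl fun j _ => ?_
  rw [Nat.descFactorial_eq_factorial_mul_choose, nsmul_eq_mul]
  push_cast
  ring

theorem sum_coeff_risingFactorials_typeB_general (n j k : ℕ) :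
    (∑ l ∈ (Finset.Nat.antidiagonalTuple (j + 1) n).filter
        (fun l => ∀ i : Fin (j + 1), (i : ℕ) < j → 0 < l i),
      (∏ i : Fin (j + 1),
        if (i : ℕ) < j then
          Polynomial.C (((l i).factorial : ℚ)⁻¹) *
            ∏ m ∈ Finset.range (l i), (Polynomial.X + (m : Polynomial ℚ))
        else
          Polynomial.C (((2 ^ l i * (l i).factorial : ℕ) : ℚ)⁻¹) *
            ∏ m ∈ Finset.range (l i), (Polynomial.X + ((2 * m + 1 : ℕ) : Polynomial ℚ))).coeff
        k) =
    ((2 ^ j * j.factorial : ℕ) : ℚ) / ((2 ^ n * n.factorial : ℕ) : ℚ) *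
      (stirlingB1 n k : ℚ) * (stirlingB2 k j : ℚ) := by
  rw [← finsetSum_coeff]
  simp only [← multichoose_X, ← multichoose_half_X_add_one, ← coeff_multichooseSeries]
  set F := multichooseSeries (X : ℚ[X])
  set H := multichooseSeries ((2 : ℚ)⁻¹ • (X + 1) : ℚ[X])
  have hF : PowerSeries.constantCoeff F = 1 := by
    simp [F, ← PowerSeries.coeff_zero_eq_constantCoeff_apply]
  rw [← PowerSeries.coeff_sub_one_pow_mul_eq_sum_compositions hF]
  refine congrFun (eq_of_forall_sum_range_choose_smul_eq
    (u := fun j => (PowerSeries.coeff n ((F - 1) ^ j * H)).coeff k)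
    (v := fun j => ((2 ^ j * j.factorial : ℕ) : ℚ) / ((2 ^ n * n.factorial : ℕ) : ℚ) *
      (stirlingB1 n k : ℚ) * (stirlingB2 k j : ℚ)) fun s => ?_) j
  have hbinom : F ^ s * H = ∑ i ∈ range (s + 1), s.choose i • ((F - 1) ^ i * H) := by
    conv_lhs => rw [← sub_add_cancel F 1, add_pow, sum_mul]
    exact sum_congr rfl fun i _ => by rw [one_pow, mul_one, nsmul_eq_mul]; ring
  rw [sum_range_choose_smul_stirlingB1_mul_stirlingB2, ← coeff_coeff_multichooseSeries_X_pow_mul,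
    hbinom, map_sum, finsetSum_coeff]
  simp only [map_nsmul, Polynomial.coeff_smul]

/-- The sum, over all compositions `l_1+⋯+l_{j+1} = n` with `l_1,…,l_j ≥ 1` and
`l_{j+1} ≥ 0`, of the coefficient of `t^k` in
`(t^{(l_1)}/l_1!)⋯(t^{(l_j)}/l_j!)·[(t+1)(t+3)⋯(t+2l_{j+1}−1)/(2^{l_{j+1}} l_{j+1}!)]`
equals `(2^j j!)/(2^n n!)·B(n,k)·S_B(k,j)`. -/
theorem sum_coeff_risingFactorials_typeB (n j k : ℕ) (hj : j ≤ n) (hk : k ≤ n) :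
    (∑ l ∈ (Finset.Nat.antidiagonalTuple (j + 1) n).filter
        (fun l => ∀ i : Fin (j + 1), (i : ℕ) < j → 0 < l i),
      (∏ i : Fin (j + 1),
        if (i : ℕ) < j then
          Polynomial.C (((l i).factorial : ℚ)⁻¹) *
            ∏ m ∈ Finset.range (l i), (Polynomial.X + (m : Polynomial ℚ))
        else
          Polynomial.C (((2 ^ l i * (l i).factorial : ℕ) : ℚ)⁻¹) *
            ∏ m ∈ Finset.range (l i), (Polynomial.X + ((2 * m + 1 : ℕ) : Polynomial ℚ))).coeff
        k) =
    ((2 ^ j * j.factorial : ℕ) : ℚ) / ((2 ^ n * n.factorial : ℕ) : ℚ) *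
      (stirlingB1 n k : ℚ) * (stirlingB2 k j : ℚ) :=
  sum_coeff_risingFactorials_typeB_general n j k
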